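/- Let P and P' be separated distributed places. Then their cross-product P ⊗ P' is a distributed place with ins_{P⊗P'} = ins_P ∪ ins_{P'}, rem_{P⊗P'} = rem_P ∪ rem_{P'}, read_{P⊗P'} = read_P ∪ read_{P'}, and the out-sequences of P ⊗ P' are exactly the union of the out-sequences of P and the out-sequences of P': outseq_{P⊗P'} = outseq_P ∪ outseq_{P'}, and coutseq_{P⊗P'} = coutseq_P ∪ coutseq_{P'}. -/

import Mathlib

open Set

structure Net (P T : Type) where
  pre : T → Set P
  post : T → Set P
  minit : Set P

variable {P T : Type}

def fireable (N : Net P T) (t : T) (M : Set P) : Prop := N.pre t ⊆ M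

def fire (N : Net P T) (t : T) (M : Set P) : Set P := (M \ N.pre t) ∪ N.post t

def valid (N : Net P T) : Set P → List T → Prop
  | _, [] => True
  | M, t :: σ => fireable N t M ∧ valid N (fire N t M) σ

def runFrom (N : Net P T) (M : Set P) (σ : List T) : Set P :=
  σ.foldl (fun M t => fire N t M) M

def isFiringSeq (N : Net P T) (σ : List T) : Prop := valid N N.minit σ

def reachable (N : Net P T) (M : Set P) : Prop :=
  ∃ σ, isFiringSeq N σ ∧ runFrom N N.minit σ = M

def safe (N : Net P T) : Prop :=
  ∀ M, reachable N M → ∀ t, fireable N t M → (N.post t \ N.pre t) ∩ M = ∅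

/-- transitions inserting tokens into some place of `Q` (the set `•Q`). -/
def preQ (N : Net P T) (Q : Set P) : Set T := {t | (N.post t ∩ Q).Nonempty}

/-- transitions removing tokens from some place of `Q` (the set `Q•`). -/
def postQ (N : Net P T) (Q : Set P) : Set T := {t | (N.pre t ∩ Q).Nonempty}

def adjQ (N : Net P T) (Q : Set P) : Set T := preQ N Q ∪ postQ N Q

def insQ (N : Net P T) (Q : Set P) : Set T := preQ N Q \ postQ N Q

def remQ (N : Net P T) (Q : Set P) : Set T := postQ N Q \ preQ N Q

def readQ (N : Net P T) (Q : Set P) : Set T :=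
  {t ∈ adjQ N Q | N.pre t ∩ Q = N.post t ∩ Q}

def enablesQ (N : Net P T) (Q : Set P) : Set (T × T) :=
  {tu | (Q ∩ (N.post tu.1 \ N.pre tu.1) ∩ N.pre tu.2).Nonempty}

def disablesQ (N : Net P T) (Q : Set P) : Set (T × T) :=
  {tu | (Q ∩ (N.pre tu.1 \ N.post tu.1) ∩ N.pre tu.2).Nonempty}

def postList (N : Net P T) (l : List T) : Set P := ⋃ t ∈ l, N.post t

def epreList (N : Net P T) (l : List T) : Set P := ⋃ t ∈ l, (N.pre t \ N.post t)

def isInSeq (N : Net P T) (Q : Set P) (σ : List T) : Prop :=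
  σ ≠ [] ∧ (∀ t ∈ σ, t ∈ insQ N Q ∪ readQ N Q) ∧
  (∀ t ∈ σ.head?, t ∈ insQ N Q) ∧
  ∀ i (h : i < σ.length), 0 < i →
    Q ∩ N.pre (σ.get ⟨i, h⟩) ⊆ postList N (σ.take i) ∧
    Q ∩ (N.post (σ.get ⟨i, h⟩) \ N.pre (σ.get ⟨i, h⟩)) ∩ postList N (σ.take i) = ∅

def isCInSeq (N : Net P T) (Q : Set P) (σ : List T) : Prop :=
  isInSeq N Q σ ∧ Q ⊆ postList N σ

def isOutSeq (N : Net P T) (Q : Set P) (σ : List T) : Prop :=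
  σ ≠ [] ∧ (∀ t ∈ σ, t ∈ remQ N Q ∪ readQ N Q) ∧
  (∀ t ∈ σ.head?, t ∈ remQ N Q) ∧
  ∀ i (h : i < σ.length), 0 < i →
    Q ∩ N.pre (σ.get ⟨i, h⟩) ⊆ Q \ epreList N (σ.take i)

def isCOutSeq (N : Net P T) (Q : Set P) (σ : List T) : Prop :=
  isOutSeq N Q σ ∧ Q ⊆ epreList N σ

def distPlace (N : Net P T) (Q : Set P) : Prop :=
  Q.Nonempty ∧
  adjQ N Q = insQ N Q ∪ remQ N Q ∪ readQ N Q ∧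
  (∀ t ∈ insQ N Q, ∀ u ∈ remQ N Q, (t, u) ∈ enablesQ N Q) ∧
  (∀ σ, isInSeq N Q σ → ∃ τ, σ <+: τ ∧ isCInSeq N Q τ) ∧
  (∀ σ, isOutSeq N Q σ → ∃ τ, σ <+: τ ∧ isCOutSeq N Q τ)

def pureDP (N : Net P T) (Q : Set P) : Prop := postQ N Q ∩ preQ N Q = ∅

def separated (N : Net P T) (Q R : Set P) : Prop := adjQ N Q ∩ adjQ N R = ∅

/-- tagged transitions `t^in` / `t^out` identifying places -/
inductive Tag (T : Type) where
  | inp : T → Tag T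
  | out : T → Tag T

/-- the net whose places are identified with their sets of tagged adjacent
transitions: `(t, π_Z) ∈ Fl` iff `t^in ∈ Z` and `(π_Z, t) ∈ Fl` iff `t^out ∈ Z`. -/
def tagNet (T : Type) : Net (Set (Tag T)) T where
  pre t := {Z | Tag.out t ∈ Z}
  post t := {Z | Tag.inp t ∈ Z}
  minit := ∅

/-- cross-product of sets of tagged places -/
def cross {T : Type} (Q R : Set (Set (Tag T))) : Set (Set (Tag T)) :=
  {W | ∃ Z ∈ Q, ∃ Z' ∈ R, W = Z ∪ Z'}

section Stmt12Aux
open List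

variable {T : Type}

lemma sep_symm {A B : Set (Set (Tag T))} (h : separated (tagNet T) A B) :
    separated (tagNet T) B A := by
  unfold separated at *; rwa [Set.inter_comm]

lemma cross_comm (A B : Set (Set (Tag T))) : cross A B = cross B A := by
  ext W
  constructor <;> rintro ⟨Z, hZ, Z', hZ', rfl⟩ <;>
    exact ⟨Z', hZ', Z, hZ, Set.union_comm Z Z'⟩

lemma mem_cross {A B : Set (Set (Tag T))} {Z Z' : Set (Tag T)}
    (hZ : Z ∈ A) (hZ' : Z' ∈ B) : Z ∪ Z' ∈ cross A B := ⟨Z, hZ, Z', hZ', rfl⟩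

lemma mem_preQ {A : Set (Set (Tag T))} {t : T} :
    t ∈ preQ (tagNet T) A ↔ ∃ Z ∈ A, Tag.inp t ∈ Z :=
  ⟨fun ⟨Z, h1, h2⟩ => ⟨Z, h2, h1⟩, fun ⟨Z, h1, h2⟩ => ⟨Z, h2, h1⟩⟩

lemma mem_postQ {A : Set (Set (Tag T))} {t : T} :
    t ∈ postQ (tagNet T) A ↔ ∃ Z ∈ A, Tag.out t ∈ Z :=
  ⟨fun ⟨Z, h1, h2⟩ => ⟨Z, h2, h1⟩, fun ⟨Z, h1, h2⟩ => ⟨Z, h2, h1⟩⟩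

lemma mem_adjQ {A : Set (Set (Tag T))} {t : T} :
    t ∈ adjQ (tagNet T) A ↔ t ∈ preQ (tagNet T) A ∨ t ∈ postQ (tagNet T) A :=
  Set.mem_union _ _ _

lemma not_adj {A B : Set (Set (Tag T))} (hsep : separated (tagNet T) A B) {t : T}
    (ht : t ∈ adjQ (tagNet T) A) : t ∉ adjQ (tagNet T) B := fun h =>
  Set.eq_empty_iff_forall_notMem.mp hsep t ⟨ht, h⟩

lemma sep_inp {A B : Set (Set (Tag T))} (hsep : separated (tagNet T) A B) {t : T}
    (ht : t ∈ adjQ (tagNet T) A) {Z' : Set (Tag T)} (hZ' : Z' ∈ B) : Tag.inp t ∉ Z' :=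
  fun h => not_adj hsep ht (mem_adjQ.mpr (Or.inl (mem_preQ.mpr ⟨Z', hZ', h⟩)))

lemma sep_out {A B : Set (Set (Tag T))} (hsep : separated (tagNet T) A B) {t : T}
    (ht : t ∈ adjQ (tagNet T) A) {Z' : Set (Tag T)} (hZ' : Z' ∈ B) : Tag.out t ∉ Z' :=
  fun h => not_adj hsep ht (mem_adjQ.mpr (Or.inr (mem_postQ.mpr ⟨Z', hZ', h⟩)))

lemma preQ_cross {A B : Set (Set (Tag T))} (hAne : A.Nonempty) (hBne : B.Nonempty) :
    preQ (tagNet T) (cross A B) = preQ (tagNet T) A ∪ preQ (tagNet T) B := by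
  ext t
  simp only [Set.mem_union, mem_preQ]
  constructor
  · rintro ⟨W, ⟨Z, hZ, Z', hZ', rfl⟩, hin⟩
    rcases hin with h | h
    · exact Or.inl ⟨Z, hZ, h⟩
    · exact Or.inr ⟨Z', hZ', h⟩
  · rintro (⟨Z, hZ, h⟩ | ⟨Z', hZ', h⟩)
    · obtain ⟨Z', hZ'⟩ := hBne; exact ⟨Z ∪ Z', mem_cross hZ hZ', Or.inl h⟩
    · obtain ⟨Z, hZ⟩ := hAne; exact ⟨Z ∪ Z', mem_cross hZ hZ', Or.inr h⟩

lemma postQ_cross {A B : Set (Set (Tag T))} (hAne : A.Nonempty) (hBne : B.Nonempty) :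
    postQ (tagNet T) (cross A B) = postQ (tagNet T) A ∪ postQ (tagNet T) B := by
  ext t
  simp only [Set.mem_union, mem_postQ]
  constructor
  · rintro ⟨W, ⟨Z, hZ, Z', hZ', rfl⟩, hin⟩
    rcases hin with h | h
    · exact Or.inl ⟨Z, hZ, h⟩
    · exact Or.inr ⟨Z', hZ', h⟩
  · rintro (⟨Z, hZ, h⟩ | ⟨Z', hZ', h⟩)
    · obtain ⟨Z', hZ'⟩ := hBne; exact ⟨Z ∪ Z', mem_cross hZ hZ', Or.inl h⟩
    · obtain ⟨Z, hZ⟩ := hAne; exact ⟨Z ∪ Z', mem_cross hZ hZ', Or.inr h⟩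

lemma adjQ_cross {A B : Set (Set (Tag T))} (hAne : A.Nonempty) (hBne : B.Nonempty) :
    adjQ (tagNet T) (cross A B) = adjQ (tagNet T) A ∪ adjQ (tagNet T) B := by
  unfold adjQ
  rw [preQ_cross hAne hBne, postQ_cross hAne hBne]
  ext t; simp only [Set.mem_union]; tauto

lemma insQ_cross {A B : Set (Set (Tag T))} (hAne : A.Nonempty) (hBne : B.Nonempty)
    (hsep : separated (tagNet T) A B) :
    insQ (tagNet T) (cross A B) = insQ (tagNet T) A ∪ insQ (tagNet T) B := by
  unfold insQ
  rw [preQ_cross hAne hBne, postQ_cross hAne hBne]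
  ext t
  simp only [Set.mem_union, Set.mem_diff]
  constructor
  · rintro ⟨hpre | hpre, hnpost⟩
    · exact Or.inl ⟨hpre, fun h => hnpost (Or.inl h)⟩
    · exact Or.inr ⟨hpre, fun h => hnpost (Or.inr h)⟩
  · rintro (⟨hpre, hnpost⟩ | ⟨hpre, hnpost⟩)
    · refine ⟨Or.inl hpre, ?_⟩
      rintro (h | h)
      · exact hnpost h
      · exact not_adj hsep (mem_adjQ.mpr (Or.inl hpre)) (mem_adjQ.mpr (Or.inr h))
    · refine ⟨Or.inr hpre, ?_⟩
      rintro (h | h)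
      · exact not_adj (sep_symm hsep) (mem_adjQ.mpr (Or.inl hpre)) (mem_adjQ.mpr (Or.inr h))
      · exact hnpost h

lemma remQ_cross {A B : Set (Set (Tag T))} (hAne : A.Nonempty) (hBne : B.Nonempty)
    (hsep : separated (tagNet T) A B) :
    remQ (tagNet T) (cross A B) = remQ (tagNet T) A ∪ remQ (tagNet T) B := by
  unfold remQ
  rw [preQ_cross hAne hBne, postQ_cross hAne hBne]
  ext t
  simp only [Set.mem_union, Set.mem_diff]
  constructor
  · rintro ⟨hpre | hpre, hnpost⟩
    · exact Or.inl ⟨hpre, fun h => hnpost (Or.inl h)⟩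
    · exact Or.inr ⟨hpre, fun h => hnpost (Or.inr h)⟩
  · rintro (⟨hpre, hnpost⟩ | ⟨hpre, hnpost⟩)
    · refine ⟨Or.inl hpre, ?_⟩
      rintro (h | h)
      · exact hnpost h
      · exact not_adj hsep (mem_adjQ.mpr (Or.inr hpre)) (mem_adjQ.mpr (Or.inl h))
    · refine ⟨Or.inr hpre, ?_⟩
      rintro (h | h)
      · exact not_adj (sep_symm hsep) (mem_adjQ.mpr (Or.inr hpre)) (mem_adjQ.mpr (Or.inl h))
      · exact hnpost h

end Stmt12Aux
section Stmt12Aux2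
open List

variable {T : Type}

lemma read_mem {Q : Set (Set (Tag T))} {t : T} (ht : t ∈ readQ (tagNet T) Q) :
    t ∈ preQ (tagNet T) Q ∧ t ∈ postQ (tagNet T) Q := by
  obtain ⟨hadj, heq⟩ := ht
  rcases mem_adjQ.mp hadj with h | h
  · refine ⟨h, ?_⟩
    have : ((tagNet T).pre t ∩ Q).Nonempty := by rw [heq]; exact h
    exact this
  · refine ⟨?_, h⟩
    have : ((tagNet T).post t ∩ Q).Nonempty := by rw [← heq]; exact h
    exact this

lemma ins_adj {Q : Set (Set (Tag T))} {t : T} (ht : t ∈ insQ (tagNet T) Q) :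
    t ∈ adjQ (tagNet T) Q := mem_adjQ.mpr (Or.inl ht.1)

lemma rem_adj {Q : Set (Set (Tag T))} {t : T} (ht : t ∈ remQ (tagNet T) Q) :
    t ∈ adjQ (tagNet T) Q := mem_adjQ.mpr (Or.inr ht.1)

lemma pre_inter_cross {A B : Set (Set (Tag T))} (hBne : B.Nonempty)
    (hsep : separated (tagNet T) A B) {t : T} (ht : t ∈ adjQ (tagNet T) A) :
    ((tagNet T).pre t ∩ cross A B = (tagNet T).post t ∩ cross A B)
      ↔ ((tagNet T).pre t ∩ A = (tagNet T).post t ∩ A) := by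
  constructor
  · intro h
    obtain ⟨Z', hZ'⟩ := hBne
    apply Set.Subset.antisymm
    · rintro Z ⟨hout, hZA⟩
      have hW : Z ∪ Z' ∈ (tagNet T).pre t ∩ cross A B :=
        ⟨Or.inl hout, mem_cross hZA hZ'⟩
      rw [h] at hW
      rcases hW.1 with h1 | h1
      · exact ⟨h1, hZA⟩
      · exact absurd h1 (sep_inp hsep ht hZ')
    · rintro Z ⟨hinp, hZA⟩
      have hW : Z ∪ Z' ∈ (tagNet T).post t ∩ cross A B :=
        ⟨Or.inl hinp, mem_cross hZA hZ'⟩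
      rw [← h] at hW
      rcases hW.1 with h1 | h1
      · exact ⟨h1, hZA⟩
      · exact absurd h1 (sep_out hsep ht hZ')
  · intro h
    apply Set.Subset.antisymm
    · rintro W ⟨hout, Z, hZ, Z', hZ', rfl⟩
      have houtZ : Tag.out t ∈ Z := by
        rcases hout with h1 | h1
        · exact h1
        · exact absurd h1 (sep_out hsep ht hZ')
      have : Z ∈ (tagNet T).post t ∩ A := h ▸ (⟨houtZ, hZ⟩ : Z ∈ (tagNet T).pre t ∩ A)
      exact ⟨Or.inl this.1, mem_cross hZ hZ'⟩
    · rintro W ⟨hinp, Z, hZ, Z', hZ', rfl⟩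
      have hinpZ : Tag.inp t ∈ Z := by
        rcases hinp with h1 | h1
        · exact h1
        · exact absurd h1 (sep_inp hsep ht hZ')
      have : Z ∈ (tagNet T).pre t ∩ A := h.symm ▸ (⟨hinpZ, hZ⟩ : Z ∈ (tagNet T).post t ∩ A)
      exact ⟨Or.inl this.1, mem_cross hZ hZ'⟩

lemma readQ_cross {A B : Set (Set (Tag T))} (hAne : A.Nonempty) (hBne : B.Nonempty)
    (hsep : separated (tagNet T) A B) :
    readQ (tagNet T) (cross A B) = readQ (tagNet T) A ∪ readQ (tagNet T) B := by
  ext t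
  constructor
  · rintro ⟨hadj, heq⟩
    rw [adjQ_cross hAne hBne] at hadj
    rcases hadj with h | h
    · exact Or.inl ⟨h, (pre_inter_cross hBne hsep h).mp heq⟩
    · refine Or.inr ⟨h, (pre_inter_cross hAne (sep_symm hsep) h).mp ?_⟩
      rwa [cross_comm] at heq
  · rintro (⟨hadj, heq⟩ | ⟨hadj, heq⟩)
    · exact ⟨(adjQ_cross hAne hBne).symm ▸ Set.mem_union_left _ hadj,
        (pre_inter_cross hBne hsep hadj).mpr heq⟩
    · refine ⟨(adjQ_cross hAne hBne).symm ▸ Set.mem_union_right _ hadj, ?_⟩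
      rw [cross_comm]
      exact (pre_inter_cross hAne (sep_symm hsep) hadj).mpr heq

lemma mem_postList {l : List T} {W : Set (Tag T)} :
    W ∈ postList (tagNet T) l ↔ ∃ t ∈ l, Tag.inp t ∈ W := by
  simp [postList, tagNet]

lemma mem_epreList {l : List T} {W : Set (Tag T)} :
    W ∈ epreList (tagNet T) l ↔ ∃ t ∈ l, Tag.out t ∈ W ∧ Tag.inp t ∉ W := by
  simp [epreList, tagNet]; tauto

lemma mem_take_get {l : List T} {i : ℕ} {t : T} (h : t ∈ l.take i) :
    ∃ k, ∃ (hk : k < l.length), k < i ∧ l.get ⟨k, hk⟩ = t := by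
  obtain ⟨⟨k, hk⟩, he⟩ := List.mem_iff_get.mp h
  have hk' : k < l.length ∧ k < i := by
    simp only [List.length_take, lt_min_iff] at hk
    exact ⟨hk.2, hk.1⟩
  refine ⟨k, hk'.1, hk'.2, ?_⟩
  rw [← he]
  simp [List.getElem_take]

lemma outseq_mem_adj {Q : Set (Set (Tag T))} {σ : List T} (h : isOutSeq (tagNet T) Q σ) :
    ∀ t ∈ σ, t ∈ adjQ (tagNet T) Q := fun t ht =>
  (h.2.1 t ht).elim (fun h => rem_adj h) (fun h => h.1)

lemma inseq_mem_adj {Q : Set (Set (Tag T))} {σ : List T} (h : isInSeq (tagNet T) Q σ) :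
    ∀ t ∈ σ, t ∈ adjQ (tagNet T) Q := fun t ht =>
  (h.2.1 t ht).elim (fun h => ins_adj h) (fun h => h.1)

end Stmt12Aux2
section Stmt12Aux3
open List

variable {T : Type}

lemma mem_tagpre {t : T} {Z : Set (Tag T)} : Z ∈ (tagNet T).pre t ↔ Tag.out t ∈ Z := Iff.rfl
lemma mem_tagpost {t : T} {Z : Set (Tag T)} : Z ∈ (tagNet T).post t ↔ Tag.inp t ∈ Z := Iff.rfl

lemma outseq_cross_of_left {A B : Set (Set (Tag T))} (hAne : A.Nonempty) (hBne : B.Nonempty)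
    (hsep : separated (tagNet T) A B) {σ : List T} (h : isOutSeq (tagNet T) A σ) :
    isOutSeq (tagNet T) (cross A B) σ := by
  have hadj : ∀ t ∈ σ, t ∈ adjQ (tagNet T) A := outseq_mem_adj h
  obtain ⟨hne, hmem, hhead, hcond⟩ := h
  refine ⟨hne, ?_, ?_, ?_⟩
  · intro t ht
    rw [Set.mem_union, remQ_cross hAne hBne hsep, readQ_cross hAne hBne hsep]
    rcases hmem t ht with h | h
    · exact Or.inl (Set.mem_union_left _ h)
    · exact Or.inr (Set.mem_union_left _ h)
  · intro t ht
    rw [remQ_cross hAne hBne hsep]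
    exact Set.mem_union_left _ (hhead t ht)
  · intro i hlen hi
    rintro W ⟨⟨Z, hZ, Z', hZ', rfl⟩, hWpre⟩
    have hti : σ.get ⟨i, hlen⟩ ∈ σ := List.get_mem σ ⟨i, hlen⟩
    have houtZ : Tag.out (σ.get ⟨i, hlen⟩) ∈ Z := by
      rcases (mem_tagpre.mp hWpre : Tag.out _ ∈ Z ∪ Z') with h1 | h1
      · exact h1
      · exact absurd h1 (sep_out hsep (hadj _ hti) hZ')
    have hZres := hcond i hlen hi ⟨hZ, mem_tagpre.mpr houtZ⟩
    refine ⟨mem_cross hZ hZ', fun hWep => ?_⟩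
    obtain ⟨t, htk, hout, hinp⟩ := mem_epreList.mp hWep
    have htσ : t ∈ σ := List.mem_of_mem_take htk
    have houtZt : Tag.out t ∈ Z := by
      rcases (hout : Tag.out t ∈ Z ∪ Z') with h1 | h1
      · exact h1
      · exact absurd h1 (sep_out hsep (hadj _ htσ) hZ')
    exact hZres.2 (mem_epreList.mpr ⟨t, htk, houtZt, fun h1 => hinp (Or.inl h1)⟩)

lemma outseq_cross_to_left {A B : Set (Set (Tag T))} (hAne : A.Nonempty) (hBne : B.Nonempty)
    (hsep : separated (tagNet T) A B) {σ : List T} (h : isOutSeq (tagNet T) (cross A B) σ)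
    (hhd : ∀ t ∈ σ.head?, t ∈ remQ (tagNet T) A) : isOutSeq (tagNet T) A σ := by
  obtain ⟨hne, hmem, hhead, hcond⟩ := h
  obtain ⟨t₀, σ', rfl⟩ : ∃ t₀ σ', σ = t₀ :: σ' := by
    cases σ with
    | nil => exact absurd rfl hne
    | cons a l => exact ⟨a, l, rfl⟩
  have ht₀ : t₀ ∈ remQ (tagNet T) A := hhd t₀ rfl
  have ht₀nA : ∀ Z ∈ A, Tag.inp t₀ ∉ Z := fun Z hZ hin => ht₀.2 (mem_preQ.mpr ⟨Z, hZ, hin⟩)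
  obtain ⟨Z₀, hZ₀A, hout₀⟩ := mem_postQ.mp ht₀.1
  have hadjA : ∀ t ∈ t₀ :: σ', t ∈ adjQ (tagNet T) A := by
    intro t ht
    have hpost : t ∈ postQ (tagNet T) (cross A B) := by
      rcases hmem t ht with h | h
      · exact h.1
      · exact (read_mem h).2
    rw [postQ_cross hAne hBne] at hpost
    rcases hpost with h | h
    · exact mem_adjQ.mpr (Or.inr h)
    · exfalso
      obtain ⟨Z', hZ'B, houtZ'⟩ := mem_postQ.mp h
      obtain ⟨⟨i, hlen⟩, hget⟩ := List.mem_iff_get.mp ht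
      rcases Nat.eq_zero_or_pos i with rfl | hi
      · have : t₀ = t := hget
        exact not_adj hsep (rem_adj ht₀) (mem_adjQ.mpr (Or.inr (this ▸ h)))
      · have hW := hcond i hlen hi
          ⟨mem_cross hZ₀A hZ'B, mem_tagpre.mpr (by rw [hget]; exact Or.inr houtZ')⟩
        apply hW.2
        refine mem_epreList.mpr ⟨t₀, ?_, Or.inl hout₀, ?_⟩
        · cases i with
          | zero => omega
          | succ j => exact List.mem_cons_self
        · rintro (h1 | h1)
          · exact ht₀nA Z₀ hZ₀A h1
          · exact sep_inp hsep (rem_adj ht₀) hZ'B h1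
  refine ⟨hne, ?_, ?_, ?_⟩
  · intro t ht
    rcases hmem t ht with h | h
    · rw [remQ_cross hAne hBne hsep] at h
      rcases h with h | h
      · exact Or.inl h
      · exact absurd (hadjA t ht) (not_adj (sep_symm hsep) (rem_adj h))
    · rw [readQ_cross hAne hBne hsep] at h
      rcases h with h | h
      · exact Or.inr h
      · exact absurd (hadjA t ht) (not_adj (sep_symm hsep) h.1)
  · intro t ht
    have : t = t₀ := by simpa using ht.symm
    exact this ▸ ht₀
  · intro i hlen hi
    rintro Z ⟨hZA, houtZ⟩
    obtain ⟨Z', hZ'B⟩ := hBne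
    have hW := hcond i hlen hi ⟨mem_cross hZA hZ'B, Or.inl houtZ⟩
    refine ⟨hZA, fun hZep => ?_⟩
    obtain ⟨t, htk, hout, hinp⟩ := mem_epreList.mp hZep
    have htσ : t ∈ t₀ :: σ' := List.mem_of_mem_take htk
    refine hW.2 (mem_epreList.mpr ⟨t, htk, Or.inl hout, ?_⟩)
    rintro (h1 | h1)
    · exact hinp h1
    · exact sep_inp hsep (hadjA t htσ) hZ'B h1

lemma outseq_cross_iff {A B : Set (Set (Tag T))} (hAne : A.Nonempty) (hBne : B.Nonempty)
    (hsep : separated (tagNet T) A B) {σ : List T} :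
    isOutSeq (tagNet T) (cross A B) σ ↔
      isOutSeq (tagNet T) A σ ∨ isOutSeq (tagNet T) B σ := by
  constructor
  · intro h
    have hhd := h.2.2.1
    cases σ with
    | nil => exact absurd rfl h.1
    | cons t₀ σ' =>
      have ht₀ : t₀ ∈ remQ (tagNet T) (cross A B) := hhd t₀ rfl
      rw [remQ_cross hAne hBne hsep] at ht₀
      rcases ht₀ with h0 | h0
      · refine Or.inl (outseq_cross_to_left hAne hBne hsep h ?_)
        intro t ht
        have : t = t₀ := by simpa using ht.symm
        exact this ▸ h0
      · rw [cross_comm] at h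
        refine Or.inr (outseq_cross_to_left hBne hAne (sep_symm hsep) h ?_)
        intro t ht
        have : t = t₀ := by simpa using ht.symm
        exact this ▸ h0
  · rintro (h | h)
    · exact outseq_cross_of_left hAne hBne hsep h
    · rw [cross_comm]
      exact outseq_cross_of_left hBne hAne (sep_symm hsep) h

lemma coutseq_cross_of_left {A B : Set (Set (Tag T))} (hAne : A.Nonempty) (hBne : B.Nonempty)
    (hsep : separated (tagNet T) A B) {σ : List T} (h : isCOutSeq (tagNet T) A σ) :
    isCOutSeq (tagNet T) (cross A B) σ := by
  have hadj : ∀ t ∈ σ, t ∈ adjQ (tagNet T) A := outseq_mem_adj h.1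
  refine ⟨outseq_cross_of_left hAne hBne hsep h.1, ?_⟩
  rintro W ⟨Z, hZ, Z', hZ', rfl⟩
  obtain ⟨t, htσ, hout, hinp⟩ := mem_epreList.mp (h.2 hZ)
  refine mem_epreList.mpr ⟨t, htσ, Or.inl hout, ?_⟩
  rintro (h1 | h1)
  · exact hinp h1
  · exact sep_inp hsep (hadj t htσ) hZ' h1

lemma coutseq_cross_iff {A B : Set (Set (Tag T))} (hAne : A.Nonempty) (hBne : B.Nonempty)
    (hsep : separated (tagNet T) A B) {σ : List T} :
    isCOutSeq (tagNet T) (cross A B) σ ↔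
      isCOutSeq (tagNet T) A σ ∨ isCOutSeq (tagNet T) B σ := by
  constructor
  · rintro ⟨hout, hcov⟩
    rcases (outseq_cross_iff hAne hBne hsep).mp hout with h | h
    · refine Or.inl ⟨h, ?_⟩
      obtain ⟨Z', hZ'B⟩ := hBne
      intro Z hZA
      obtain ⟨t, htσ, hto, hti⟩ := mem_epreList.mp (hcov (mem_cross hZA hZ'B))
      have hadj := outseq_mem_adj h t htσ
      have houtZ : Tag.out t ∈ Z := by
        rcases (hto : Tag.out t ∈ Z ∪ Z') with h1 | h1
        · exact h1
        · exact absurd h1 (sep_out hsep hadj hZ'B)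
      exact mem_epreList.mpr ⟨t, htσ, houtZ, fun h1 => hti (Or.inl h1)⟩
    · refine Or.inr ⟨h, ?_⟩
      obtain ⟨Z, hZA⟩ := hAne
      intro Z' hZ'B
      obtain ⟨t, htσ, hto, hti⟩ := mem_epreList.mp (hcov (mem_cross hZA hZ'B))
      have hadj := outseq_mem_adj h t htσ
      have houtZ : Tag.out t ∈ Z' := by
        rcases (hto : Tag.out t ∈ Z ∪ Z') with h1 | h1
        · exact absurd h1 (sep_out (sep_symm hsep) hadj hZA)
        · exact h1
      exact mem_epreList.mpr ⟨t, htσ, houtZ, fun h1 => hti (Or.inr h1)⟩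
  · rintro (h | h)
    · exact coutseq_cross_of_left hAne hBne hsep h
    · rw [cross_comm]
      exact coutseq_cross_of_left hBne hAne (sep_symm hsep) h

end Stmt12Aux3
section Stmt12Aux4
open List

variable {T : Type}

lemma inseq_cross_of_left {A B : Set (Set (Tag T))} (hAne : A.Nonempty) (hBne : B.Nonempty)
    (hsep : separated (tagNet T) A B) {σ : List T} (h : isInSeq (tagNet T) A σ) :
    isInSeq (tagNet T) (cross A B) σ := by
  have hadj : ∀ t ∈ σ, t ∈ adjQ (tagNet T) A := inseq_mem_adj h
  obtain ⟨hne, hmem, hhead, hcond⟩ := h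
  refine ⟨hne, ?_, ?_, ?_⟩
  · intro t ht
    rw [Set.mem_union, insQ_cross hAne hBne hsep, readQ_cross hAne hBne hsep]
    rcases hmem t ht with h | h
    · exact Or.inl (Set.mem_union_left _ h)
    · exact Or.inr (Set.mem_union_left _ h)
  · intro t ht
    rw [insQ_cross hAne hBne hsep]
    exact Set.mem_union_left _ (hhead t ht)
  · intro i hlen hi
    have hti : σ.get ⟨i, hlen⟩ ∈ σ := List.get_mem σ ⟨i, hlen⟩
    constructor
    · rintro W ⟨⟨Z, hZ, Z', hZ', rfl⟩, hWpre⟩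
      have houtZ : Tag.out (σ.get ⟨i, hlen⟩) ∈ Z := by
        rcases (hWpre : Tag.out _ ∈ Z ∪ Z') with h1 | h1
        · exact h1
        · exact absurd h1 (sep_out hsep (hadj _ hti) hZ')
      obtain ⟨u, hu, hinpu⟩ := mem_postList.mp ((hcond i hlen hi).1 ⟨hZ, houtZ⟩)
      exact mem_postList.mpr ⟨u, hu, Or.inl hinpu⟩
    · rw [Set.eq_empty_iff_forall_notMem]
      rintro W ⟨⟨⟨Z, hZ, Z', hZ', rfl⟩, hpost, hnpre⟩, hpl⟩
      have hinpZ : Tag.inp (σ.get ⟨i, hlen⟩) ∈ Z := by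
        rcases (hpost : Tag.inp _ ∈ Z ∪ Z') with h1 | h1
        · exact h1
        · exact absurd h1 (sep_inp hsep (hadj _ hti) hZ')
      have houtZ : Tag.out (σ.get ⟨i, hlen⟩) ∉ Z := fun h1 => hnpre (Or.inl h1)
      obtain ⟨u, hu, hinpu⟩ := mem_postList.mp hpl
      have huZ : Tag.inp u ∈ Z := by
        rcases (hinpu : Tag.inp u ∈ Z ∪ Z') with h1 | h1
        · exact h1
        · exact absurd h1 (sep_inp hsep (hadj _ (List.mem_of_mem_take hu)) hZ')
      have h2 := (hcond i hlen hi).2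
      rw [Set.eq_empty_iff_forall_notMem] at h2
      exact h2 Z ⟨⟨hZ, hinpZ, houtZ⟩, mem_postList.mpr ⟨u, hu, huZ⟩⟩

lemma cinseq_cross_of_left {A B : Set (Set (Tag T))} (hAne : A.Nonempty) (hBne : B.Nonempty)
    (hsep : separated (tagNet T) A B) {σ : List T} (h : isCInSeq (tagNet T) A σ) :
    isCInSeq (tagNet T) (cross A B) σ := by
  refine ⟨inseq_cross_of_left hAne hBne hsep h.1, ?_⟩
  rintro W ⟨Z, hZ, Z', hZ', rfl⟩
  obtain ⟨u, hu, hp⟩ := mem_postList.mp (h.2 hZ)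
  exact mem_postList.mpr ⟨u, hu, Or.inl hp⟩

lemma inseq_cross_to_left {A B : Set (Set (Tag T))} (hAne : A.Nonempty) (hBne : B.Nonempty)
    (hsep : separated (tagNet T) A B) {σ : List T} (h : isInSeq (tagNet T) (cross A B) σ)
    (hhd : ∀ t ∈ σ.head?, t ∈ insQ (tagNet T) A)
    (hcov : ¬ A ⊆ postList (tagNet T) σ) : isInSeq (tagNet T) A σ := by
  obtain ⟨hne, hmem, hhead, hcond⟩ := h
  obtain ⟨t₀, σ', rfl⟩ : ∃ t₀ σ', σ = t₀ :: σ' := by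
    cases σ with
    | nil => exact absurd rfl hne
    | cons a l => exact ⟨a, l, rfl⟩
  have ht₀ : t₀ ∈ insQ (tagNet T) A := hhd t₀ rfl
  obtain ⟨Z₀, hZ₀A, hinp₀⟩ := mem_preQ.mp ht₀.1
  obtain ⟨Z, hZA, hZnc⟩ := Set.not_subset.mp hcov
  have hadjA : ∀ i, ∀ hilt : i < (t₀ :: σ').length,
      (t₀ :: σ').get ⟨i, hilt⟩ ∈ adjQ (tagNet T) A := by
    intro i
    induction i using Nat.strong_induction_on with
    | _ i IH =>
      intro hilt
      by_contra hnA
      have hti : (t₀ :: σ').get ⟨i, hilt⟩ ∈ t₀ :: σ' := List.get_mem _ _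
      have hipos : 0 < i := by
        rcases Nat.eq_zero_or_pos i with rfl | hp
        · exact absurd (ins_adj ht₀) hnA
        · exact hp
      have hpreB : (t₀ :: σ').get ⟨i, hilt⟩ ∈ preQ (tagNet T) B := by
        have hp : (t₀ :: σ').get ⟨i, hilt⟩ ∈ preQ (tagNet T) (cross A B) :=
          (hmem _ hti).elim (fun h => h.1) (fun h => (read_mem h).1)
        rw [preQ_cross hAne hBne] at hp
        rcases hp with h | h
        · exact absurd (mem_adjQ.mpr (Or.inl h)) hnA
        · exact h
      by_cases hpB : (t₀ :: σ').get ⟨i, hilt⟩ ∈ postQ (tagNet T) B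
      · obtain ⟨Z', hZ'B, houtZ'⟩ := mem_postQ.mp hpB
        have hW := (hcond i hilt hipos).1 ⟨mem_cross hZA hZ'B, Or.inr houtZ'⟩
        obtain ⟨u, hu, hinpu⟩ := mem_postList.mp hW
        obtain ⟨k, hk, hki, hgu⟩ := mem_take_get hu
        have huadjA : u ∈ adjQ (tagNet T) A := hgu ▸ IH k hki hk
        rcases (hinpu : Tag.inp u ∈ Z ∪ Z') with h1 | h1
        · exact hZnc (mem_postList.mpr ⟨u, List.mem_of_mem_take hu, h1⟩)
        · exact sep_inp hsep huadjA hZ'B h1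
      · obtain ⟨Z', hZ'B, hinpZ'⟩ := mem_preQ.mp hpreB
        have h2 := (hcond i hilt hipos).2
        rw [Set.eq_empty_iff_forall_notMem] at h2
        apply h2 (Z₀ ∪ Z')
        refine ⟨⟨mem_cross hZ₀A hZ'B, (Or.inr hinpZ' : Tag.inp _ ∈ Z₀ ∪ Z'), ?_⟩, ?_⟩
        · rintro (h3 | h3)
          · exact hnA (mem_adjQ.mpr (Or.inr (mem_postQ.mpr ⟨Z₀, hZ₀A, h3⟩)))
          · exact hpB (mem_postQ.mpr ⟨Z', hZ'B, h3⟩)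
        · refine mem_postList.mpr ⟨t₀, ?_, Or.inl hinp₀⟩
          cases i with
          | zero => omega
          | succ j => exact List.mem_cons_self
  have hadj' : ∀ t ∈ t₀ :: σ', t ∈ adjQ (tagNet T) A := by
    intro t ht
    obtain ⟨⟨k, hk⟩, he⟩ := List.mem_iff_get.mp ht
    exact he ▸ hadjA k hk
  refine ⟨hne, ?_, ?_, ?_⟩
  · intro t ht
    rcases hmem t ht with h | h
    · rw [insQ_cross hAne hBne hsep] at h
      rcases h with h | h
      · exact Or.inl h
      · exact absurd (hadj' t ht) (not_adj (sep_symm hsep) (ins_adj h))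
    · rw [readQ_cross hAne hBne hsep] at h
      rcases h with h | h
      · exact Or.inr h
      · exact absurd (hadj' t ht) (not_adj (sep_symm hsep) h.1)
  · intro t ht
    have : t = t₀ := by simpa using ht.symm
    exact this ▸ ht₀
  · intro i hlen hi
    have htiadj : (t₀ :: σ').get ⟨i, hlen⟩ ∈ adjQ (tagNet T) A :=
      hadj' _ (List.get_mem _ _)
    constructor
    · rintro Z₁ ⟨hZ₁A, houtZ₁⟩
      obtain ⟨Z', hZ'B⟩ := hBne
      have hW := (hcond i hlen hi).1 ⟨mem_cross hZ₁A hZ'B, Or.inl houtZ₁⟩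
      obtain ⟨u, hu, hinpu⟩ := mem_postList.mp hW
      rcases (hinpu : Tag.inp u ∈ Z₁ ∪ Z') with h1 | h1
      · exact mem_postList.mpr ⟨u, hu, h1⟩
      · exact absurd h1 (sep_inp hsep (hadj' u (List.mem_of_mem_take hu)) hZ'B)
    · rw [Set.eq_empty_iff_forall_notMem]
      rintro Z₁ ⟨⟨hZ₁A, hpost, hnpre⟩, hpl⟩
      obtain ⟨Z', hZ'B⟩ := hBne
      have h2 := (hcond i hlen hi).2
      rw [Set.eq_empty_iff_forall_notMem] at h2
      apply h2 (Z₁ ∪ Z')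
      refine ⟨⟨mem_cross hZ₁A hZ'B, (Or.inl hpost : Tag.inp _ ∈ Z₁ ∪ Z'), ?_⟩, ?_⟩
      · rintro (h3 | h3)
        · exact hnpre h3
        · exact sep_out hsep htiadj hZ'B h3
      · obtain ⟨u, hu, hinpu⟩ := mem_postList.mp hpl
        exact mem_postList.mpr ⟨u, hu, Or.inl hinpu⟩

lemma inseq_extend_cross {A B : Set (Set (Tag T))} (hAne : A.Nonempty) (hBne : B.Nonempty)
    (hsep : separated (tagNet T) A B)
    (hA4 : ∀ σ, isInSeq (tagNet T) A σ → ∃ τ, σ <+: τ ∧ isCInSeq (tagNet T) A τ)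
    (hB4 : ∀ σ, isInSeq (tagNet T) B σ → ∃ τ, σ <+: τ ∧ isCInSeq (tagNet T) B τ) :
    ∀ σ, isInSeq (tagNet T) (cross A B) σ →
      ∃ τ, σ <+: τ ∧ isCInSeq (tagNet T) (cross A B) τ := by
  intro σ h
  by_cases hcovA : A ⊆ postList (tagNet T) σ
  · refine ⟨σ, List.prefix_refl σ, h, ?_⟩
    rintro W ⟨Z, hZ, Z', hZ', rfl⟩
    obtain ⟨u, hu, hp⟩ := mem_postList.mp (hcovA hZ)
    exact mem_postList.mpr ⟨u, hu, Or.inl hp⟩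
  by_cases hcovB : B ⊆ postList (tagNet T) σ
  · refine ⟨σ, List.prefix_refl σ, h, ?_⟩
    rintro W ⟨Z, hZ, Z', hZ', rfl⟩
    obtain ⟨u, hu, hp⟩ := mem_postList.mp (hcovB hZ')
    exact mem_postList.mpr ⟨u, hu, Or.inr hp⟩
  obtain ⟨t₀, σ', rfl⟩ : ∃ t₀ σ', σ = t₀ :: σ' := by
    cases σ with
    | nil => exact absurd rfl h.1
    | cons a l => exact ⟨a, l, rfl⟩
  have ht₀ : t₀ ∈ insQ (tagNet T) (cross A B) := h.2.2.1 t₀ rfl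
  rw [insQ_cross hAne hBne hsep] at ht₀
  rcases ht₀ with h0 | h0
  · have hAseq := inseq_cross_to_left hAne hBne hsep h
      (fun t ht => by simpa using (by simpa using ht.symm : t = t₀) ▸ h0) hcovA
    obtain ⟨τ, hpre, hcτ⟩ := hA4 _ hAseq
    exact ⟨τ, hpre, cinseq_cross_of_left hAne hBne hsep hcτ⟩
  · rw [cross_comm] at h
    have hBseq := inseq_cross_to_left hBne hAne (sep_symm hsep) h
      (fun t ht => by simpa using (by simpa using ht.symm : t = t₀) ▸ h0) hcovB
    obtain ⟨τ, hpre, hcτ⟩ := hB4 _ hBseq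
    refine ⟨τ, hpre, ?_⟩
    rw [cross_comm]
    exact cinseq_cross_of_left hBne hAne (sep_symm hsep) hcτ

lemma outseq_extend_cross {A B : Set (Set (Tag T))} (hAne : A.Nonempty) (hBne : B.Nonempty)
    (hsep : separated (tagNet T) A B)
    (hA5 : ∀ σ, isOutSeq (tagNet T) A σ → ∃ τ, σ <+: τ ∧ isCOutSeq (tagNet T) A τ)
    (hB5 : ∀ σ, isOutSeq (tagNet T) B σ → ∃ τ, σ <+: τ ∧ isCOutSeq (tagNet T) B τ) :
    ∀ σ, isOutSeq (tagNet T) (cross A B) σ →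
      ∃ τ, σ <+: τ ∧ isCOutSeq (tagNet T) (cross A B) τ := by
  intro σ h
  rcases (outseq_cross_iff hAne hBne hsep).mp h with h | h
  · obtain ⟨τ, hpre, hcτ⟩ := hA5 _ h
    exact ⟨τ, hpre, coutseq_cross_of_left hAne hBne hsep hcτ⟩
  · obtain ⟨τ, hpre, hcτ⟩ := hB5 _ h
    refine ⟨τ, hpre, ?_⟩
    rw [cross_comm]
    exact coutseq_cross_of_left hBne hAne (sep_symm hsep) hcτ

end Stmt12Aux4
/-- the cross-product of separated distributed places is a distributed
place whose `ins`/`rem`/`read` sets are unions and whose (complete) out-sequences are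
the unions of the components' (complete) out-sequences. -/
theorem stmt12 (T : Type) (A B : Set (Set (Tag T)))
    (hA : distPlace (tagNet T) A) (hB : distPlace (tagNet T) B)
    (hsep : separated (tagNet T) A B) :
    distPlace (tagNet T) (cross A B) ∧
    insQ (tagNet T) (cross A B) = insQ (tagNet T) A ∪ insQ (tagNet T) B ∧
    remQ (tagNet T) (cross A B) = remQ (tagNet T) A ∪ remQ (tagNet T) B ∧
    readQ (tagNet T) (cross A B) = readQ (tagNet T) A ∪ readQ (tagNet T) B ∧
    {σ : List T | isOutSeq (tagNet T) (cross A B) σ}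
      = {σ | isOutSeq (tagNet T) A σ} ∪ {σ | isOutSeq (tagNet T) B σ} ∧
    {σ : List T | isCOutSeq (tagNet T) (cross A B) σ}
      = {σ | isCOutSeq (tagNet T) A σ} ∪ {σ | isCOutSeq (tagNet T) B σ} := by
  obtain ⟨hAne, hAadj, hAen, hA4, hA5⟩ := hA
  obtain ⟨hBne, hBadj, hBen, hB4, hB5⟩ := hB
  have hins := insQ_cross hAne hBne hsep
  have hrem := remQ_cross hAne hBne hsep
  have hread := readQ_cross hAne hBne hsep
  refine ⟨⟨?_, ?_, ?_, ?_, ?_⟩, hins, hrem, hread, ?_, ?_⟩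
  · obtain ⟨Z, hZ⟩ := hAne
    obtain ⟨Z', hZ'⟩ := hBne
    exact ⟨Z ∪ Z', mem_cross hZ hZ'⟩
  · rw [adjQ_cross hAne hBne, hins, hrem, hread, hAadj, hBadj]
    ext t; simp only [Set.mem_union]; tauto
  · intro t ht u hu
    rw [hins] at ht
    rw [hrem] at hu
    rcases ht with htA | htB <;> rcases hu with huA | huB
    · obtain ⟨Z, ⟨hZA, hpost, hnpre⟩, hpreu⟩ := hAen t htA u huA
      obtain ⟨Z', hZ'B⟩ := hBne
      refine ⟨Z ∪ Z', ⟨mem_cross hZA hZ'B, (Or.inl hpost : Tag.inp t ∈ Z ∪ Z'), ?_⟩,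
        (Or.inl hpreu : Tag.out u ∈ Z ∪ Z')⟩
      rintro (h1 | h1)
      · exact hnpre h1
      · exact sep_out hsep (ins_adj htA) hZ'B h1
    · obtain ⟨Zt, hZtA, hinpt⟩ := mem_preQ.mp htA.1
      obtain ⟨Z', hZ'B, houtu⟩ := mem_postQ.mp huB.1
      refine ⟨Zt ∪ Z', ⟨mem_cross hZtA hZ'B, (Or.inl hinpt : Tag.inp t ∈ Zt ∪ Z'), ?_⟩,
        (Or.inr houtu : Tag.out u ∈ Zt ∪ Z')⟩
      rintro (h1 | h1)
      · exact htA.2 (mem_postQ.mpr ⟨Zt, hZtA, h1⟩)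
      · exact sep_out hsep (ins_adj htA) hZ'B h1
    · obtain ⟨Z', hZ'B, hinpt⟩ := mem_preQ.mp htB.1
      obtain ⟨Z, hZA, houtu⟩ := mem_postQ.mp huA.1
      refine ⟨Z ∪ Z', ⟨mem_cross hZA hZ'B, (Or.inr hinpt : Tag.inp t ∈ Z ∪ Z'), ?_⟩,
        (Or.inl houtu : Tag.out u ∈ Z ∪ Z')⟩
      rintro (h1 | h1)
      · exact sep_out (sep_symm hsep) (ins_adj htB) hZA h1
      · exact htB.2 (mem_postQ.mpr ⟨Z', hZ'B, h1⟩)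
    · obtain ⟨Z', ⟨hZ'B, hpost, hnpre⟩, hpreu⟩ := hBen t htB u huB
      obtain ⟨Z, hZA⟩ := hAne
      refine ⟨Z ∪ Z', ⟨mem_cross hZA hZ'B, (Or.inr hpost : Tag.inp t ∈ Z ∪ Z'), ?_⟩,
        (Or.inr hpreu : Tag.out u ∈ Z ∪ Z')⟩
      rintro (h1 | h1)
      · exact sep_out (sep_symm hsep) (ins_adj htB) hZA h1
      · exact hnpre h1
  · exact inseq_extend_cross hAne hBne hsep hA4 hB4
  · exact outseq_extend_cross hAne hBne hsep hA5 hB5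
  · ext σ
    simp only [Set.mem_setOf_eq, Set.mem_union]
    exact outseq_cross_iff hAne hBne hsep
  · ext σ
    simp only [Set.mem_setOf_eq, Set.mem_union]
    exact coutseq_cross_iff hAne hBne hsep
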